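/- arXiv:1805.03744 — 2 statements merged into one kernel-verified Lean document; each statement's English description precedes it below -/
import Mathlib

section
/- Under monotonicity, the exclusion restriction, and the homogeneity null hypothesis H_00 (τ_j = τ_0 for every cluster j), the null distribution of the adjusted difference-in-means statistic T(τ_0) is exactly the permutation distribution: for every t ∈ ℝ, P( T(τ_0) ≤ t ) = |{ subsets s ⊆ {1,…,J}, |s| = m : (1/m)Σ_{j∈s} A_j(τ_0) − (1/(J−m))Σ_{j∉s} A_j(τ_0) ≤ t }| / C(J,m), where A_j(τ_0) = Σ_i Y_ji^(D_ji^(1)) − τ_0 Σ_i D_ji^(1) ( = Σ_i Y_ji^(D_ji^(0)) − τ_0 Σ_i D_ji^(0) ) is the assignment-invariant adjusted response of cluster j. -/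
open Finset
open scoped Classical

/-! Under monotonicity a unit's treatment received differs between the two arms only if it is a
complier, so the change of a cluster's outcome total between arms is the sum of its compliers'
effects, and the change of its uptake total is its number of compliers. Under `H_00` the first is
`τ₀` times the second, hence the adjusted response `Σ Y - τ₀ Σ D` is the same in both arms. The
statistic then only depends on the assignment through the split of the fixed values `A_j`, which
is the permutation distribution. -/

section Compliers

variable {ι : Type*} [Fintype ι] (d1 d0 : ι → Bool)

def compliers : Finset ι := univ.filter fun i => d1 i = true ∧ d0 i = false

variable {d1 d0}

theorem sum_sub_sum_eq_sum_compliers {M : Type*} [AddCommGroup M]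
    (hmono : ∀ i, d0 i = true → d1 i = true) (f : ι → Bool → M) :
    ∑ i, f i (d1 i) - ∑ i, f i (d0 i) = ∑ i ∈ compliers d1 d0, (f i true - f i false) := by
  rw [← sum_sub_distrib, compliers, sum_filter]
  refine sum_congr rfl fun i _ => ?_
  cases h1 : d1 i <;> cases h0 : d0 i <;> simp_all

theorem adjusted_total_eq_of_sum_compliers_eq (hmono : ∀ i, d0 i = true → d1 i = true)
    (y : ι → Bool → ℝ) (τ : ℝ)
    (hτ : ∑ i ∈ compliers d1 d0, (y i true - y i false) = τ * #(compliers d1 d0)) :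
    ∑ i, y i (d0 i) - τ * ∑ i, (if d0 i then (1 : ℝ) else 0) =
      ∑ i, y i (d1 i) - τ * ∑ i, (if d1 i then (1 : ℝ) else 0) := by
  have hy := sum_sub_sum_eq_sum_compliers hmono y
  have hcount := sum_sub_sum_eq_sum_compliers hmono fun _ b => if b then (1 : ℝ) else 0
  simp only [if_true, Bool.false_eq_true, if_false, sub_zero, sum_const, nsmul_one] at hcount
  linear_combination τ * hcount - hy - hτ

end Compliers

theorem stmt14_general
    (J m : ℕ)
    (n : Fin J → ℕ)
    -- potential compliances and potential outcomes (exclusion restriction: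
    -- outcomes depend only on the treatment received)
    (D1 D0 : (j : Fin J) → Fin (n j) → Bool)
    (Y : (j : Fin J) → Fin (n j) → Bool → ℝ)
    -- monotonicity: no defiers
    (mono : ∀ j i, D0 j i = true → D1 j i = true)
    (nCO : Fin J → ℕ)
    (hnCO : ∀ j, nCO j =
      (univ.filter (fun i => D1 j i = true ∧ D0 j i = false)).card)
    (hnCO1 : ∀ j, 1 ≤ nCO j)
    -- cluster-level CACEs and the homogeneity null hypothesis H_00
    (τc : Fin J → ℝ)
    (hτc : ∀ j, τc j =
      (∑ i ∈ univ.filter (fun i => D1 j i = true ∧ D0 j i = false),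
        (Y j i true - Y j i false)) / nCO j)
    (τ0 : ℝ) (H00 : ∀ j, τc j = τ0)
    -- the test statistic computed from the observed cluster totals under assignment s
    (T : Finset (Fin J) → ℝ)
    (hT : ∀ s, T s =
      (∑ j ∈ s, ((∑ i, Y j i (D1 j i)) -
        τ0 * ∑ i, (if D1 j i then (1 : ℝ) else 0))) / m -
      (∑ j ∈ sᶜ, ((∑ i, Y j i (D0 j i)) -
        τ0 * ∑ i, (if D0 j i then (1 : ℝ) else 0))) / ((J : ℝ) - m))
    -- the assignment-invariant adjusted responses
    (A : Fin J → ℝ)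
    (hA : ∀ j, A j = (∑ i, Y j i (D1 j i)) -
      τ0 * ∑ i, (if D1 j i then (1 : ℝ) else 0)) :
    ∀ t : ℝ,
      ((((univ : Finset (Finset (Fin J))).filter
          (fun s => s.card = m ∧ T s ≤ t)).card : ℝ) / (J.choose m)) =
      ((((univ : Finset (Finset (Fin J))).filter
          (fun s => s.card = m ∧
            (∑ j ∈ s, A j) / m - (∑ j ∈ sᶜ, A j) / ((J : ℝ) - m) ≤ t)).card : ℝ) /
        (J.choose m)) := by
  have hcomplier_effects : ∀ j, ∑ i ∈ compliers (D1 j) (D0 j), (Y j i true - Y j i false) =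
      τ0 * #(compliers (D1 j) (D0 j)) := by
    intro j
    have hpos : (nCO j : ℝ) ≠ 0 := Nat.cast_ne_zero.mpr (Nat.one_le_iff_ne_zero.mp (hnCO1 j))
    rw [compliers, ← hnCO j, ← H00 j, hτc j, div_mul_cancel₀ _ hpos]
  have hA0 : ∀ j, A j = ∑ i, Y j i (D0 j i) - τ0 * ∑ i, (if D0 j i then (1 : ℝ) else 0) :=
    fun j => (hA j).trans
      (adjusted_total_eq_of_sum_compliers_eq (mono j) (Y j) τ0 (hcomplier_effects j)).symm
  have hTA : ∀ s, T s = (∑ j ∈ s, A j) / m - (∑ j ∈ sᶜ, A j) / ((J : ℝ) - m) := by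
    intro s
    rw [hT, sum_congr rfl fun j _ => (hA j).symm, sum_congr rfl fun j _ => (hA0 j).symm]
  intro t
  simp only [hTA]

/-- Under monotonicity, the exclusion restriction, and the homogeneity null `H_00`, the
null distribution of the adjusted difference-in-means statistic `T(τ_0)` is exactly the
permutation distribution of the assignment-invariant adjusted responses `A_j(τ_0)`. -/
theorem stmt14
    (J m : ℕ) (hm0 : 0 < m) (hmJ : m < J)
    (n : Fin J → ℕ) (hn : ∀ j, 1 ≤ n j)
    -- potential compliances and potential outcomes (exclusion restriction:
    -- outcomes depend only on the treatment received)
    (D1 D0 : (j : Fin J) → Fin (n j) → Bool)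
    (Y : (j : Fin J) → Fin (n j) → Bool → ℝ)
    -- monotonicity: no defiers
    (mono : ∀ j i, D0 j i = true → D1 j i = true)
    (nCO : Fin J → ℕ)
    (hnCO : ∀ j, nCO j =
      (univ.filter (fun i => D1 j i = true ∧ D0 j i = false)).card)
    (hnCO1 : ∀ j, 1 ≤ nCO j)
    -- cluster-level CACEs and the homogeneity null hypothesis H_00
    (τc : Fin J → ℝ)
    (hτc : ∀ j, τc j =
      (∑ i ∈ univ.filter (fun i => D1 j i = true ∧ D0 j i = false),
        (Y j i true - Y j i false)) / nCO j)
    (τ0 : ℝ) (H00 : ∀ j, τc j = τ0)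
    -- the test statistic computed from the observed cluster totals under assignment s
    (T : Finset (Fin J) → ℝ)
    (hT : ∀ s, T s =
      (∑ j ∈ s, ((∑ i, Y j i (D1 j i)) -
        τ0 * ∑ i, (if D1 j i then (1 : ℝ) else 0))) / m -
      (∑ j ∈ sᶜ, ((∑ i, Y j i (D0 j i)) -
        τ0 * ∑ i, (if D0 j i then (1 : ℝ) else 0))) / ((J : ℝ) - m))
    -- the assignment-invariant adjusted responses
    (A : Fin J → ℝ)
    (hA : ∀ j, A j = (∑ i, Y j i (D1 j i)) -
      τ0 * ∑ i, (if D1 j i then (1 : ℝ) else 0)) :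
    ∀ t : ℝ,
      ((((univ : Finset (Finset (Fin J))).filter
          (fun s => s.card = m ∧ T s ≤ t)).card : ℝ) / (J.choose m)) =
      ((((univ : Finset (Finset (Fin J))).filter
          (fun s => s.card = m ∧
            (∑ j ∈ s, A j) / m - (∑ j ∈ sᶜ, A j) / ((J : ℝ) - m) ≤ t)).card : ℝ) /
        (J.choose m)) :=
  stmt14_general J m n D1 D0 Y mono nCO hnCO hnCO1 τc hτc τ0 H00 T hT A hA
end

section
/- Suppose the cluster-mean adjusted quantities satisfy |ā_j| ≤ c and |b̄_j| ≤ c for all j, and 0 ≤ d̄_j^(1), d̄_j^(0) ≤ 1 for all j, and let τ_CL = E[Ȳ_T − Ȳ_C]/E[D̄_T − D̄_C] (the denominator assumed nonzero). Then the randomization variance of the recentered cluster-level contrast is bounded: Var[ Ȳ_T − Ȳ_C − τ_CL (D̄_T − D̄_C) ] ≤ ( J² / ((J−m) m (J−1)) ) · ( c + |τ_CL| )², and E[ Ȳ_T − Ȳ_C − τ_CL (D̄_T − D̄_C) ] = 0. -/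
/-!
With `x j = a j - τ d1 j` and `y j = b j - τ d0 j`, the recentered contrast is
`∑_{j ∈ S} g j - const` for `g j = x j / m + y j / (J - m)`. Its mean vanishes by the choice
of `τ`, and its variance is that of a sample total drawn without replacement,
`m (J - m) / (J (J - 1)) * (∑ g² - (∑ g)² / J)`, which follows from the inclusion
probabilities `P(t ⊆ S) = C(m, #t) / C(J, #t)` of singletons and pairs `t`. Finally
`|g j| ≤ (c + |τ|) (1 / m + 1 / (J - m))`.
-/

open Finset

/-- Average of `f` over all size-`m` treated subsets of the `J` clusters
(uniform cluster randomization). -/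
noncomputable def clExpect (J m : ℕ) (f : Finset (Fin J) → ℝ) : ℝ :=
  (∑ s ∈ (univ : Finset (Finset (Fin J))).filter (fun s => s.card = m), f s) / (J.choose m)

theorem Finset.card_filter_powersetCard_subset_mul_choose {α : Type*} [DecidableEq α]
    {t u : Finset α} (htu : t ⊆ u) (m : ℕ) :
    #{s ∈ u.powersetCard m | t ⊆ s} * (#u).choose #t = (#u).choose m * m.choose #t := by
  rcases le_or_gt #t m with htm | hmt
  · rw [card_filter_powersetCard_subset t u m htu htm, mul_comm, Nat.choose_mul htm]
  · rw [Nat.choose_eq_zero_of_lt hmt, mul_zero, mul_eq_zero, card_eq_zero, filter_eq_empty_iff]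
    exact Or.inl fun s hs hts => (card_le_card hts).not_gt ((mem_powersetCard.1 hs).2 ▸ hmt)

theorem mul_sub_div_mul_sub_one_nonneg {m J : ℝ} (hm : 0 ≤ m) (hmJ : m ≤ J) (hJ : 1 ≤ J) :
    0 ≤ m * (J - m) / (J * (J - 1)) :=
  div_nonneg (mul_nonneg hm (sub_nonneg.2 hmJ)) (mul_nonneg (by linarith) (sub_nonneg.2 hJ))

theorem sum_div_sub_sum_compl_div {α : Type*} [Fintype α] [DecidableEq α] (s : Finset α)
    (x y : α → ℝ) (p q : ℝ) :
    (∑ j ∈ s, x j) / p - (∑ j ∈ sᶜ, y j) / q = ∑ j ∈ s, (x j / p + y j / q) - (∑ j, y j) / q := by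
  rw [sum_add_distrib, ← sum_div, ← sum_div, ← sum_compl_add_sum s y]
  ring

theorem abs_sub_mul_le_add_abs {a c d τ : ℝ} (ha : |a| ≤ c) (hd : 0 ≤ d ∧ d ≤ 1) :
    |a - τ * d| ≤ c + |τ| := by
  have hτd : |τ * d| ≤ |τ| := by
    rw [abs_mul, abs_of_nonneg hd.1]
    exact mul_le_of_le_one_right (abs_nonneg τ) hd.2
  linarith [abs_sub a (τ * d)]

theorem abs_div_add_div_le {x y p q K : ℝ} (hx : |x| ≤ K) (hy : |y| ≤ K) (hp : 0 < p)
    (hq : 0 < q) : |x / p + y / q| ≤ K / p + K / q :=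
  calc |x / p + y / q| ≤ |x / p| + |y / q| := abs_add_le _ _
    _ = |x| / p + |y| / q := by rw [abs_div, abs_div, abs_of_pos hp, abs_of_pos hq]
    _ ≤ K / p + K / q := by gcongr

section clExpect

variable {J m : ℕ}

theorem clExpect_eq_sum_powersetCard (f : Finset (Fin J) → ℝ) :
    clExpect J m f = ∑ s ∈ powersetCard m univ, f s / J.choose m := by
  rw [clExpect, powersetCard_eq_filter, powerset_univ, sum_div]

theorem clExpect_sub (f g : Finset (Fin J) → ℝ) :
    clExpect J m (fun s => f s - g s) = clExpect J m f - clExpect J m g := by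
  simp only [clExpect_eq_sum_powersetCard, sub_div, sum_sub_distrib]

theorem clExpect_const_mul (r : ℝ) (f : Finset (Fin J) → ℝ) :
    clExpect J m (fun s => r * f s) = r * clExpect J m f := by
  simp only [clExpect_eq_sum_powersetCard, mul_div_assoc, mul_sum]

theorem clExpect_sum {ι : Type*} (T : Finset ι) (f : ι → Finset (Fin J) → ℝ) :
    clExpect J m (fun s => ∑ i ∈ T, f i s) = ∑ i ∈ T, clExpect J m (f i) := by
  simp only [clExpect_eq_sum_powersetCard, sum_div]
  exact sum_comm

theorem clExpect_const (hmJ : m ≤ J) (r : ℝ) : clExpect J m (fun _ => r) = r := by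
  have : (J.choose m : ℝ) ≠ 0 := by exact_mod_cast (Nat.choose_pos hmJ).ne'
  rw [clExpect_eq_sum_powersetCard, sum_const, card_powersetCard, card_univ, Fintype.card_fin,
    nsmul_eq_mul, mul_div_cancel₀ _ this]

theorem clExpect_sub_div_mul_eq_zero {Y D : Finset (Fin J) → ℝ} (hD : clExpect J m D ≠ 0) :
    clExpect J m (fun s => Y s - clExpect J m Y / clExpect J m D * D s) = 0 := by
  rw [clExpect_sub, clExpect_const_mul, div_mul_cancel₀ _ hD, sub_self]

theorem clExpect_indicator_subset (hmJ : m ≤ J) (t : Finset (Fin J)) :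
    clExpect J m (fun s => if t ⊆ s then 1 else 0) = (m.choose #t : ℝ) / J.choose #t := by
  have hJm : (J.choose m : ℝ) ≠ 0 := by exact_mod_cast (Nat.choose_pos hmJ).ne'
  have hJt : (J.choose #t : ℝ) ≠ 0 := by
    exact_mod_cast (Nat.choose_pos (card_le_univ t |>.trans_eq (Fintype.card_fin J))).ne'
  have hcount := congrArg (Nat.cast (R := ℝ))
    (card_filter_powersetCard_subset_mul_choose (subset_univ t) m)
  simp only [card_univ, Fintype.card_fin, Nat.cast_mul] at hcount
  rw [clExpect_eq_sum_powersetCard, ← sum_div, ← sum_filter, sum_const, nsmul_one,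
    div_eq_div_iff hJm hJt, hcount, mul_comm]

theorem clExpect_indicator_mem (hmJ : m ≤ J) (i : Fin J) :
    clExpect J m (fun s => if i ∈ s then 1 else 0) = m / J := by
  simpa using clExpect_indicator_subset hmJ {i}

theorem clExpect_indicator_mem_mem (hmJ : m ≤ J) {i j : Fin J} (hij : i ≠ j) :
    clExpect J m (fun s => if i ∈ s ∧ j ∈ s then 1 else 0) = m * (m - 1) / (J * (J - 1)) := by
  have h := clExpect_indicator_subset hmJ {i, j}
  simp only [insert_subset_iff, singleton_subset_iff, card_pair hij, Nat.cast_choose_two] at h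
  rw [h]
  field_simp

theorem clExpect_sum_mem (hmJ : m ≤ J) (g : Fin J → ℝ) :
    clExpect J m (fun s => ∑ j ∈ s, g j) = m / J * ∑ j, g j := by
  have hind : (fun s : Finset (Fin J) => ∑ j ∈ s, g j) =
      fun s => ∑ j, g j * if j ∈ s then 1 else 0 := by
    simp
  simp only [hind, clExpect_sum, clExpect_const_mul, clExpect_indicator_mem hmJ, mul_sum]
  exact sum_congr rfl fun j _ => mul_comm _ _

theorem clExpect_sq_sum_mem (hmJ : m ≤ J) (g : Fin J → ℝ) :
    clExpect J m (fun s => (∑ j ∈ s, g j) ^ 2) =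
      m / J * ∑ j, g j ^ 2 + m * (m - 1) / (J * (J - 1)) * ((∑ j, g j) ^ 2 - ∑ j, g j ^ 2) := by
  set p : ℝ := m / J
  set q : ℝ := m * (m - 1) / (J * (J - 1))
  have hind : (fun s : Finset (Fin J) => (∑ j ∈ s, g j) ^ 2) =
      fun s => ∑ i, ∑ j, g i * g j * if i ∈ s ∧ j ∈ s then 1 else 0 := by
    simp [sq, sum_mul_sum, ite_and]
  have hpair : ∀ i j : Fin J, g i * g j * clExpect J m (fun s => if i ∈ s ∧ j ∈ s then 1 else 0)
      = q * (g i * g j) + if i = j then (p - q) * g i ^ 2 else 0 := by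
    intro i j
    split_ifs with hij
    · subst hij
      simp only [and_self, clExpect_indicator_mem hmJ]
      ring
    · rw [clExpect_indicator_mem_mem hmJ hij]
      ring
  simp only [hind, clExpect_sum, clExpect_const_mul, hpair, sum_add_distrib, sum_ite_eq,
    mem_univ, if_true, ← mul_sum, ← sum_mul, ← sq]
  ring

theorem clExpect_sq_sum_mem_sub_mean (hJ : 2 ≤ J) (hmJ : m ≤ J) (g : Fin J → ℝ) :
    clExpect J m (fun s => (∑ j ∈ s, g j - m / J * ∑ j, g j) ^ 2) =
      m * (J - m) / (J * (J - 1)) * (∑ j, g j ^ 2 - (∑ j, g j) ^ 2 / J) := by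
  have hexpand : (fun s : Finset (Fin J) => (∑ j ∈ s, g j - m / J * ∑ j, g j) ^ 2) =
      fun s => (∑ j ∈ s, g j) ^ 2 -
        (2 * (m / J * ∑ j, g j) * ∑ j ∈ s, g j - (m / J * ∑ j, g j) ^ 2) := by
    ext s
    ring
  have hJ0 : (J : ℝ) ≠ 0 := by positivity
  have hJ1 : (J : ℝ) - 1 ≠ 0 := by
    rw [sub_ne_zero]
    exact_mod_cast (by omega : J ≠ 1)
  rw [hexpand, clExpect_sub, clExpect_sub, clExpect_const_mul, clExpect_const hmJ,
    clExpect_sq_sum_mem hmJ, clExpect_sum_mem hmJ]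
  field_simp
  ring

theorem clExpect_sq_sum_mem_sub_mean_le (hJ : 2 ≤ J) (hmJ : m ≤ J) (g : Fin J → ℝ) :
    clExpect J m (fun s => (∑ j ∈ s, g j - m / J * ∑ j, g j) ^ 2) ≤
      m * (J - m) / (J * (J - 1)) * ∑ j, g j ^ 2 := by
  rw [clExpect_sq_sum_mem_sub_mean hJ hmJ]
  gcongr
  · exact mul_sub_div_mul_sub_one_nonneg (Nat.cast_nonneg m) (by exact_mod_cast hmJ)
      (by exact_mod_cast hJ.trans' one_le_two)
  · exact sub_le_self _ (by positivity)

theorem clExpect_sq_sum_mem_sub_mean_le_of_abs_le (hJ : 2 ≤ J) (hmJ : m ≤ J) {g : Fin J → ℝ}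
    {B : ℝ} (hg : ∀ j, |g j| ≤ B) :
    clExpect J m (fun s => (∑ j ∈ s, g j - m / J * ∑ j, g j) ^ 2) ≤
      m * (J - m) / (J * (J - 1)) * (J * B ^ 2) := by
  have hsum_sq : ∑ j, g j ^ 2 ≤ J * B ^ 2 := by
    simpa using sum_le_card_nsmul univ (fun j => g j ^ 2) _
      fun j _ => sq_le_sq' (abs_le.1 (hg j)).1 (abs_le.1 (hg j)).2
  refine (clExpect_sq_sum_mem_sub_mean_le hJ hmJ g).trans ?_
  gcongr
  exact mul_sub_div_mul_sub_one_nonneg (Nat.cast_nonneg m) (by exact_mod_cast hmJ)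
    (by exact_mod_cast hJ.trans' one_le_two)

end clExpect

/-- With bounded cluster-mean outcomes and compliances in `[0,1]`, the recentered
cluster-level contrast `Ȳ_T − Ȳ_C − τ_CL (D̄_T − D̄_C)` has randomization mean zero and
variance at most `J²/((J−m)m(J−1)) (c + |τ_CL|)²`. -/
theorem stmt15
    (J m : ℕ) (hJ : 2 ≤ J) (hm0 : 0 < m) (hmJ : m < J)
    -- fixed cluster-mean outcomes (treated/control) and compliances (treated/control)
    (a b d1 d0 : Fin J → ℝ) (c : ℝ)
    (ha : ∀ j, |a j| ≤ c) (hb : ∀ j, |b j| ≤ c)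
    (hd1 : ∀ j, 0 ≤ d1 j ∧ d1 j ≤ 1) (hd0 : ∀ j, 0 ≤ d0 j ∧ d0 j ≤ 1)
    -- Ȳ_T − Ȳ_C and D̄_T − D̄_C as functions of the treated set s
    (Ydiff Ddiff : Finset (Fin J) → ℝ)
    (hYdiff : ∀ s, Ydiff s = (∑ j ∈ s, a j) / m - (∑ j ∈ sᶜ, b j) / ((J : ℝ) - m))
    (hDdiff : ∀ s, Ddiff s = (∑ j ∈ s, d1 j) / m - (∑ j ∈ sᶜ, d0 j) / ((J : ℝ) - m))
    (hden : clExpect J m Ddiff ≠ 0)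
    (τCL : ℝ) (hτCL : τCL = clExpect J m Ydiff / clExpect J m Ddiff) :
    clExpect J m (fun s => Ydiff s - τCL * Ddiff s) = 0 ∧
    clExpect J m (fun s =>
        (Ydiff s - τCL * Ddiff s -
          clExpect J m (fun s' => Ydiff s' - τCL * Ddiff s')) ^ 2) ≤
      (J : ℝ) ^ 2 / (((J : ℝ) - m) * m * ((J : ℝ) - 1)) * (c + |τCL|) ^ 2 := by
  have hmean : clExpect J m (fun s => Ydiff s - τCL * Ddiff s) = 0 :=
    hτCL ▸ clExpect_sub_div_mul_eq_zero hden
  refine ⟨hmean, ?_⟩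
  have hm : (0 : ℝ) < m := by exact_mod_cast hm0
  have hJm : (0 : ℝ) < J - m := sub_pos.2 (by exact_mod_cast hmJ)
  set K := c + |τCL|
  set x : Fin J → ℝ := fun j => a j - τCL * d1 j
  set y : Fin J → ℝ := fun j => b j - τCL * d0 j
  set g : Fin J → ℝ := fun j => x j / m + y j / (J - m)
  have hX : ∀ s, Ydiff s - τCL * Ddiff s = ∑ j ∈ s, g j - (∑ j, y j) / (J - m) := fun s =>
    calc Ydiff s - τCL * Ddiff s = (∑ j ∈ s, x j) / m - (∑ j ∈ sᶜ, y j) / (J - m) := by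
          simp only [hYdiff, hDdiff, x, y, sum_sub_distrib, ← mul_sum]
          ring
      _ = _ := sum_div_sub_sum_compl_div s x y _ _
  have hconst : (∑ j, y j) / (J - m) = m / J * ∑ j, g j := by
    simp only [hX] at hmean
    rw [clExpect_sub, clExpect_sum_mem hmJ.le, clExpect_const hmJ.le, sub_eq_zero] at hmean
    exact hmean.symm
  have hg : ∀ j, |g j| ≤ K / m + K / (J - m) := fun j =>
    abs_div_add_div_le (abs_sub_mul_le_add_abs (ha j) (hd1 j))
      (abs_sub_mul_le_add_abs (hb j) (hd0 j)) hm hJm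
  rw [hmean]
  simp only [sub_zero, hX, hconst]
  calc _ ≤ m * (J - m) / (J * (J - 1)) * (J * (K / m + K / (J - m)) ^ 2) :=
        clExpect_sq_sum_mem_sub_mean_le_of_abs_le hJ hmJ.le hg
    _ = J ^ 2 / ((J - m) * m * (J - 1)) * K ^ 2 := by
        field_simp
        ring
end
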